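/- Let K > 0 and r > 0, and let φ : [x₀, r] → ℝ with φ(r) = r (where φ here denotes the function φ(y) = y - (original φ)(y) of the 2-player contest, written as varphi) satisfy the ODE varphi(y)·varphi'(y) = -K·varphi(y) + r·(K+1) on (x₀, r), with varphi(x₀) = 0 and varphi(r) = r. Then for y ∈ [x₀, r], y = x₀ - varphi(y)/K - (x₀/(K - ln(1+K)))·ln(1 - varphi(y)·(K - ln(1+K))/(K·x₀)), and r = x₀·K²/((K+1)·(K - ln(1+K))). -/

import Mathlib

/-!
With `A = r (K + 1)`, the ODE `φ φ' = A - K φ` has the first integral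
`y + φ y / K + (A / K²) log (1 - K φ y / A)`, constant along solutions as long as `K φ < A`.
It equals `x₀` at `y = x₀` and `r (K + 1) (K - log (1 + K)) / K²` at `y = r`, since there
`1 - K r / A = 1 / (K + 1)`; this is the formula for `r`. Substituting
`A / K² = x₀ / (K - log (1 + K))` back into the first integral gives the implicit solution.
-/

open Set

lemma eq_left_of_hasDerivAt_zero {f : ℝ → ℝ} {a b : ℝ} (hf : ContinuousOn f (Icc a b))
    (hf' : ∀ x ∈ Ioo a b, HasDerivAt f 0 x) : ∀ x ∈ Icc a b, f x = f a := by
  have hf'' : ∀ x ∈ interior (Icc a b), HasDerivWithinAt f 0 (interior (Icc a b)) x := by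
    rw [interior_Icc]
    exact fun x hx => (hf' x hx).hasDerivWithinAt
  have hmono := monotoneOn_of_hasDerivWithinAt_nonneg (convex_Icc a b) hf hf'' fun _ _ => le_rfl
  have hanti := antitoneOn_of_hasDerivWithinAt_nonpos (convex_Icc a b) hf hf'' fun _ _ => le_rfl
  intro x hx
  have ha : a ∈ Icc a b := ⟨le_rfl, hx.1.trans hx.2⟩
  exact le_antisymm (hanti ha hx hx.1) (hmono ha hx hx.1)

lemma sub_log_one_add_pos {K : ℝ} (hK : 0 < K) : 0 < K - Real.log (1 + K) := by
  have := Real.log_lt_sub_one_of_pos (by linarith : (0 : ℝ) < 1 + K) (by linarith)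
  linarith

/-- A first integral of `φ φ' = A - K φ`. -/
noncomputable def firstIntegral (K A : ℝ) (φ : ℝ → ℝ) (y : ℝ) : ℝ :=
  y + φ y / K + A / K ^ 2 * Real.log (1 - K * φ y / A)

lemma hasDerivAt_firstIntegral {K A : ℝ} {φ : ℝ → ℝ} {φ' y : ℝ} (hK : K ≠ 0) (hA : A ≠ 0)
    (hφA : K * φ y ≠ A) (hφ : HasDerivAt φ φ' y) (hode : φ y * φ' = -K * φ y + A) :
    HasDerivAt (firstIntegral K A φ) 0 y := by
  have hlog : 1 - K * φ y / A ≠ 0 :=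
    sub_ne_zero.2 fun h => hφA ((div_eq_one_iff_eq hA).1 h.symm)
  have h := ((hasDerivAt_id y).add (hφ.div_const K)).add
    ((((hφ.const_mul K).div_const A).const_sub 1).log hlog |>.const_mul (A / K ^ 2))
  refine h.congr_deriv ?_
  rw [one_sub_div hA]
  field_simp
  linear_combination -K * hode

lemma firstIntegral_eq_of_ode {K A a b : ℝ} {φ φ' : ℝ → ℝ} (hK : K ≠ 0) (hA : A ≠ 0)
    (hφA : ∀ y ∈ Icc a b, K * φ y ≠ A) (hc : ContinuousOn φ (Icc a b))
    (hd : ∀ y ∈ Ioo a b, HasDerivAt φ (φ' y) y)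
    (hode : ∀ y ∈ Ioo a b, φ y * φ' y = -K * φ y + A) :
    ∀ y ∈ Icc a b, firstIntegral K A φ y = firstIntegral K A φ a := by
  refine eq_left_of_hasDerivAt_zero ?_ fun y hy =>
    hasDerivAt_firstIntegral hK hA (hφA y (Ioo_subset_Icc_self hy)) (hd y hy) (hode y hy)
  refine (continuousOn_id.add (hc.div_const K)).add (ContinuousOn.const_mul ?_ _)
  exact (continuousOn_const.sub ((hc.const_mul K).div_const A)).log fun y hy =>
    sub_ne_zero.2 fun h => hφA y hy ((div_eq_one_iff_eq hA).1 h.symm)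

lemma firstIntegral_of_eq_zero {K A y : ℝ} {φ : ℝ → ℝ} (hy : φ y = 0) :
    firstIntegral K A φ y = y := by
  simp [firstIntegral, hy]

lemma firstIntegral_of_eq_self {K r : ℝ} {φ : ℝ → ℝ} (hK : 0 < K) (hr : 0 < r) (hφ : φ r = r) :
    firstIntegral K (r * (K + 1)) φ r = r * (K + 1) / K ^ 2 * (K - Real.log (1 + K)) := by
  have harg : 1 - K * r / (r * (K + 1)) = (1 + K)⁻¹ := by
    field_simp
    ring
  rw [firstIntegral, hφ, harg, Real.log_inv]
  field_simp
  ring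

/-- 2-player contest: if `varphi` solves
`varphi varphi' = -K varphi + r(K+1)` on `(x₀,r)` with `varphi(x₀) = 0`, `varphi(r) = r`,
then the implicit solution
`y = x₀ - varphi(y)/K - (x₀/(K - ln(1+K))) ln(1 - varphi(y)(K - ln(1+K))/(K x₀))` holds on
`[x₀,r]` and `r = x₀ K²/((K+1)(K - ln(1+K)))`. -/
theorem stmt_16 (K x₀ r : ℝ) (hK : 0 < K) (hx₀ : 0 < x₀) (hr : x₀ < r)
    (varphi varphi' : ℝ → ℝ)
    (hc : ContinuousOn varphi (Set.Icc x₀ r))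
    (hmono : StrictMonoOn varphi (Set.Icc x₀ r))
    (hd : ∀ y ∈ Set.Ioo x₀ r, HasDerivAt varphi (varphi' y) y)
    (hode : ∀ y ∈ Set.Ioo x₀ r, varphi y * varphi' y = -K * varphi y + r * (K + 1))
    (h0 : varphi x₀ = 0) (hrr : varphi r = r) :
    (∀ y ∈ Set.Icc x₀ r,
        y = x₀ - varphi y / K -
          (x₀ / (K - Real.log (1 + K))) *
            Real.log (1 - varphi y * (K - Real.log (1 + K)) / (K * x₀))) ∧
      r = x₀ * K ^ 2 / ((K + 1) * (K - Real.log (1 + K))) := by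
  have hr0 : 0 < r := hx₀.trans hr
  have hL := sub_log_one_add_pos hK
  have hrI : r ∈ Icc x₀ r := right_mem_Icc.2 hr.le
  have hφA : ∀ y ∈ Icc x₀ r, K * varphi y ≠ r * (K + 1) := fun y hy => by
    have : varphi y ≤ r := hrr ▸ hmono.monotoneOn hy hrI hy.2
    nlinarith
  have hconst := firstIntegral_eq_of_ode hK.ne' (by positivity) hφA hc hd hode
  rw [firstIntegral_of_eq_zero h0] at hconst
  have hx₀r := hconst r hrI
  rw [firstIntegral_of_eq_self hK hr0 hrr] at hx₀r
  refine ⟨fun y hy => ?_, by rw [← hx₀r]; field_simp⟩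
  have hy := hconst y hy
  have hA : r * (K + 1) = x₀ * K ^ 2 / (K - Real.log (1 + K)) := by
    rw [← hx₀r]; field_simp
  rw [firstIntegral, hA] at hy
  field_simp at hy ⊢
  linear_combination hy
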